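/- Let k be a field equipped with an additive valuation v : k → ℝ ∪ {+∞} (v(x) = +∞ iff x = 0, v(xy) = v(x) + v(y), v(x+y) ≥ min(v(x), v(y))) and a group homomorphism T : (ℝ,+) → (kˣ,·) with v(T(λ)) = λ for all λ ∈ ℝ. For w ∈ ℝⁿ define Φ_w on the Laurent polynomial ring in n variables over k by Φ_w(z^α) = T(⟨α, w⟩)·z^α, extended k-linearly. Then: (a) Φ_w is a k-algebra homomorphism; (b) Φ_w ∘ Φ_{w'} = Φ_{w+w'} and Φ_0 = id, so each Φ_w is an automorphism with inverse Φ_{−w}, and for any triple w, w', w'' with w + w' = w'' the corresponding triangle of maps commutes; (c) for every p ∈ ℝⁿ and every Laurent polynomial F, val_p(Φ_w(F)) = val_{p+w}(F), where val_p(Σ c_α z^α) = min_{α}(v(c_α) + ⟨α, p⟩). -/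

import Mathlib

/-- The standard pairing `⟨α, w⟩ = Σᵢ αᵢ wᵢ` of `α ∈ ℤⁿ` with `w ∈ ℝⁿ`. -/
noncomputable def zpairing {n : ℕ} (α : Fin n → ℤ) (w : Fin n → ℝ) : ℝ :=
  ∑ i, (α i : ℝ) * w i

/-- The monomial `z^α` in the Laurent polynomial ring in `n` variables over `k`. -/
noncomputable def zmon {k : Type*} [Field k] {n : ℕ} (α : Fin n → ℤ) :
    AddMonoidAlgebra k (Fin n → ℤ) :=
  AddMonoidAlgebra.single α 1

/-- The valuation `val_p(F) = min_{α ∈ supp F} (v(c_α) + ⟨α, p⟩)` of a Laurent polynomial at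
`p ∈ ℝⁿ` (with `val_p(0) = +∞`). -/
noncomputable def valPt {k : Type*} [Field k] {n : ℕ} (v : k → EReal)
    (p : Fin n → ℝ) (F : AddMonoidAlgebra k (Fin n → ℤ)) : EReal :=
  F.coeff.support.inf fun α => v (F.coeff α) + ((zpairing α p : ℝ) : EReal)

/-!
`Φ_w` acts diagonally on the monomial basis, with eigenvalue `T(⟨α, w⟩)` at `z^α`. Since
`α ↦ T(⟨α, w⟩)` is a character of `ℤⁿ`, `Φ_w` is multiplicative; since `w ↦ T(⟨α, w⟩)` is a
character of `ℝⁿ`, the `Φ_w` compose like translations. The eigenvalues are units of valuation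
`⟨α, w⟩`, so `Φ_w` keeps the support of `F` and turns each term `v(c_α) + ⟨α, p⟩` of `val_p` into
`v(c_α) + ⟨α, p + w⟩`.
-/

theorem zpairing_add_left {n : ℕ} (α β : Fin n → ℤ) (w : Fin n → ℝ) :
    zpairing (α + β) w = zpairing α w + zpairing β w := by
  simp [zpairing, add_mul, Finset.sum_add_distrib]

theorem zpairing_add_right {n : ℕ} (α : Fin n → ℤ) (w w' : Fin n → ℝ) :
    zpairing α (w + w') = zpairing α w + zpairing α w' := by
  simp [zpairing, mul_add, Finset.sum_add_distrib]

@[simp]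
theorem zpairing_zero_left {n : ℕ} (w : Fin n → ℝ) : zpairing 0 w = 0 := by
  simp [zpairing]

@[simp]
theorem zpairing_zero_right {n : ℕ} (α : Fin n → ℤ) : zpairing α 0 = 0 := by
  simp [zpairing]

namespace AddMonoidAlgebra

variable {k G : Type*} [CommSemiring k]

def ScalesMonomials (L : AddMonoidAlgebra k G →ₗ[k] AddMonoidAlgebra k G) (c : G → k) : Prop :=
  ∀ α, L (single α 1) = c α • single α 1

namespace ScalesMonomials

variable {L L' : AddMonoidAlgebra k G →ₗ[k] AddMonoidAlgebra k G} {c c' : G → k}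

theorem map_single (hL : ScalesMonomials L c) (α : G) (a : k) :
    L (single α a) = single α (c α * a) :=
  calc L (single α a) = L (a • single α 1) := by rw [smul_single', mul_one]
    _ = single α (c α * a) := by rw [map_smul, hL, smul_smul, smul_single', mul_one, mul_comm]

theorem coeff_apply (hL : ScalesMonomials L c) (F : AddMonoidAlgebra k G) (β : G) :
    (L F).coeff β = c β * F.coeff β := by
  classical
  induction F using AddMonoidAlgebra.induction_linear with
  | zero => simp
  | add F₁ F₂ h₁ h₂ => simp only [map_add, coeff_add, Finsupp.add_apply, h₁, h₂, mul_add]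
  | single α a =>
    rw [hL.map_single]
    by_cases h : α = β
    · subst h; simp
    · simp [h]

theorem support_coeff_apply {u : G → kˣ} (hL : ScalesMonomials L fun α => (u α : k))
    (F : AddMonoidAlgebra k G) : (L F).coeff.support = F.coeff.support := by
  ext β
  simp [hL.coeff_apply]

theorem unique (hL : ScalesMonomials L c) (hL' : ScalesMonomials L' c') (h : ∀ α, c α = c' α) :
    L = L' :=
  lhom_ext' fun α => LinearMap.ext fun a => by simp [hL.map_single, hL'.map_single, h]

theorem comp (hL : ScalesMonomials L c) (hL' : ScalesMonomials L' c') :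
    ScalesMonomials (L ∘ₗ L') (c * c') := fun α => by
  rw [LinearMap.comp_apply, hL', map_smul, hL, smul_smul, Pi.mul_apply, mul_comm]

theorem id : ScalesMonomials (LinearMap.id : AddMonoidAlgebra k G →ₗ[k] _) 1 := fun α => by
  simp

theorem map_mul [AddMonoid G] (hL : ScalesMonomials L c) (hc : ∀ α β, c (α + β) = c α * c β)
    (x y : AddMonoidAlgebra k G) : L (x * y) = L x * L y := by
  induction x using AddMonoidAlgebra.induction_linear with
  | zero => simp
  | add x₁ x₂ h₁ h₂ => rw [add_mul, map_add, map_add, h₁, h₂, add_mul]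
  | single α a =>
    induction y using AddMonoidAlgebra.induction_linear with
    | zero => simp
    | add y₁ y₂ h₁ h₂ => rw [mul_add, map_add, map_add, h₁, h₂, mul_add]
    | single β b =>
      simp only [single_mul_single, hL.map_single, hc]
      congr 1
      ring

theorem map_one [AddMonoid G] (hL : ScalesMonomials L c) (hc : c 0 = 1) : L 1 = 1 := by
  rw [one_def, hL.map_single, hc, mul_one]

end ScalesMonomials

end AddMonoidAlgebra

open AddMonoidAlgebra

theorem valPt_apply_of_scalesMonomials {k : Type*} [Field k] {n : ℕ} {v : k → EReal}
    (hv_mul : ∀ x y : k, v (x * y) = v x + v y)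
    {L : AddMonoidAlgebra k (Fin n → ℤ) →ₗ[k] AddMonoidAlgebra k (Fin n → ℤ)}
    {u : (Fin n → ℤ) → kˣ} {w : Fin n → ℝ} (hL : ScalesMonomials L fun α => (u α : k))
    (hu : ∀ α, v (u α) = zpairing α w) (p : Fin n → ℝ) (F : AddMonoidAlgebra k (Fin n → ℤ)) :
    valPt v p (L F) = valPt v (p + w) F := by
  rw [valPt, valPt, hL.support_coeff_apply]
  refine Finset.inf_congr rfl fun α _ => ?_
  rw [hL.coeff_apply, hv_mul, hu, zpairing_add_right, EReal.coe_add]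
  ac_rfl

theorem basepoint_change_automorphisms_general {k : Type*} [Field k] (n : ℕ)
    (v : k → EReal)
    (hv_mul : ∀ x y : k, v (x * y) = v x + v y)
    (T : ℝ → kˣ) (hT_add : ∀ lam mu : ℝ, T (lam + mu) = T lam * T mu)
    (hT_val : ∀ lam : ℝ, v ((T lam : kˣ) : k) = (lam : EReal))
    (Φ : (Fin n → ℝ) →
      (AddMonoidAlgebra k (Fin n → ℤ) →ₗ[k] AddMonoidAlgebra k (Fin n → ℤ)))
    (hΦ : ∀ (w : Fin n → ℝ) (α : Fin n → ℤ),
      Φ w (zmon α) = ((T (zpairing α w) : kˣ) : k) • (zmon α : AddMonoidAlgebra k (Fin n → ℤ))) :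
    (∀ (w : Fin n → ℝ) (F G : AddMonoidAlgebra k (Fin n → ℤ)),
      Φ w (F * G) = Φ w F * Φ w G) ∧
    (∀ w : Fin n → ℝ, Φ w (1 : AddMonoidAlgebra k (Fin n → ℤ)) = 1) ∧
    (∀ w w' : Fin n → ℝ, Φ w ∘ₗ Φ w' = Φ (w + w')) ∧
    (Φ 0 = LinearMap.id) ∧
    (∀ w : Fin n → ℝ, Φ w ∘ₗ Φ (-w) = LinearMap.id ∧ Φ (-w) ∘ₗ Φ w = LinearMap.id) ∧
    (∀ w : Fin n → ℝ, Function.Bijective (Φ w)) ∧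
    (∀ w w' w'' : Fin n → ℝ, w + w' = w'' → Φ w ∘ₗ Φ w' = Φ w'') ∧
    (∀ (w p : Fin n → ℝ) (F : AddMonoidAlgebra k (Fin n → ℤ)),
      valPt v p (Φ w F) = valPt v (p + w) F) := by
  have hT_zero : T 0 = 1 := by simpa using hT_add 0 0
  have hΦ_scales : ∀ w, ScalesMonomials (Φ w) fun α => (T (zpairing α w) : k) := hΦ
  have hcomp : ∀ w w', Φ w ∘ₗ Φ w' = Φ (w + w') := fun w w' =>
    ((hΦ_scales w).comp (hΦ_scales w')).unique (hΦ_scales (w + w')) fun α => by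
      simp [zpairing_add_right, hT_add]
  have hzero : Φ 0 = LinearMap.id :=
    (hΦ_scales 0).unique ScalesMonomials.id fun α => by simp [hT_zero]
  have hinv : ∀ w, Φ w ∘ₗ Φ (-w) = LinearMap.id ∧ Φ (-w) ∘ₗ Φ w = LinearMap.id := fun w =>
    ⟨by rw [hcomp, add_neg_cancel, hzero], by rw [hcomp, neg_add_cancel, hzero]⟩
  refine ⟨fun w => (hΦ_scales w).map_mul fun α β => by simp [zpairing_add_left, hT_add],
    fun w => (hΦ_scales w).map_one (by simp [hT_zero]), hcomp, hzero, hinv,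
    fun w => Function.bijective_iff_has_inverse.mpr
      ⟨Φ (-w), LinearMap.congr_fun (hinv w).2, LinearMap.congr_fun (hinv w).1⟩,
    fun w w' w'' h => h ▸ hcomp w w',
    fun w p F => valPt_apply_of_scalesMonomials hv_mul (hΦ_scales w) (fun α => hT_val _) p F⟩

/-- Change-of-basepoint automorphisms of the Laurent polynomial ring over a valued field `k`
equipped with `T : (ℝ,+) → (kˣ,·)` with `v(T(λ)) = λ`: the `k`-linear maps `Φ_w` determined on
monomials by `Φ_w(z^α) = T(⟨α,w⟩)·z^α` satisfy
(a) each `Φ_w` is a `k`-algebra homomorphism;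
(b) `Φ_w ∘ Φ_{w'} = Φ_{w+w'}` and `Φ_0 = id`, so each `Φ_w` is an automorphism with inverse
`Φ_{−w}`, and the triangles for triples `w + w' = w''` commute;
(c) `val_p(Φ_w(F)) = val_{p+w}(F)` for every `p ∈ ℝⁿ` and every `F`. -/
theorem basepoint_change_automorphisms {k : Type*} [Field k] (n : ℕ)
    (v : k → EReal)
    (hv_top : ∀ x : k, v x = ⊤ ↔ x = 0) (hv_bot : ∀ x : k, v x ≠ ⊥)
    (hv_mul : ∀ x y : k, v (x * y) = v x + v y)
    (hv_add : ∀ x y : k, min (v x) (v y) ≤ v (x + y))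
    (T : ℝ → kˣ) (hT_add : ∀ lam mu : ℝ, T (lam + mu) = T lam * T mu)
    (hT_val : ∀ lam : ℝ, v ((T lam : kˣ) : k) = (lam : EReal))
    (Φ : (Fin n → ℝ) →
      (AddMonoidAlgebra k (Fin n → ℤ) →ₗ[k] AddMonoidAlgebra k (Fin n → ℤ)))
    (hΦ : ∀ (w : Fin n → ℝ) (α : Fin n → ℤ),
      Φ w (zmon α) = ((T (zpairing α w) : kˣ) : k) • (zmon α : AddMonoidAlgebra k (Fin n → ℤ))) :
    (∀ (w : Fin n → ℝ) (F G : AddMonoidAlgebra k (Fin n → ℤ)),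
      Φ w (F * G) = Φ w F * Φ w G) ∧
    (∀ w : Fin n → ℝ, Φ w (1 : AddMonoidAlgebra k (Fin n → ℤ)) = 1) ∧
    (∀ w w' : Fin n → ℝ, Φ w ∘ₗ Φ w' = Φ (w + w')) ∧
    (Φ 0 = LinearMap.id) ∧
    (∀ w : Fin n → ℝ, Φ w ∘ₗ Φ (-w) = LinearMap.id ∧ Φ (-w) ∘ₗ Φ w = LinearMap.id) ∧
    (∀ w : Fin n → ℝ, Function.Bijective (Φ w)) ∧
    (∀ w w' w'' : Fin n → ℝ, w + w' = w'' → Φ w ∘ₗ Φ w' = Φ w'') ∧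
    (∀ (w p : Fin n → ℝ) (F : AddMonoidAlgebra k (Fin n → ℤ)),
      valPt v p (Φ w F) = valPt v (p + w) F) :=
  basepoint_change_automorphisms_general n v hv_mul T hT_add hT_val Φ hΦ
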